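/- Let λ be a nonzero real number and m a positive integer. For every n ≥ 0, the identity (x)_{n,λ} = Σ_{k=0}^{n} { Σ_{l=k}^{n} Σ_{i=0}^{n−l} C(n,l) S_{1,λ/m}(l,k) S_1(n−l,i) m^{n−k−i} (−1)^i } d_{m,λ}(k,x) holds as polynomials in x, where C(n,l) is the binomial coefficient. -/

import Mathlib

open Nat PowerSeries Finset

noncomputable section

/-- λ-falling factorial (x)_{n,λ} = x(x−λ)···(x−(n−1)λ). -/
def dfall (l x : ℝ) (n : ℕ) : ℝ := ∏ i ∈ range n, (x - i * l)

/-- degenerate exponential e_λ^x(t) = Σ (x)_{n,λ} t^n/n! as a formal power series. -/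
def degExp (l x : ℝ) : PowerSeries ℝ := PowerSeries.mk fun n => dfall l x n / n !

/-- degenerate logarithm log_λ(1+t) = Σ_{n≥1} (∏_{j=1}^{n−1}(λ−j)) t^n/n!. -/
def degLog (l : ℝ) : PowerSeries ℝ :=
  PowerSeries.mk fun n => if n = 0 then 0 else (∏ j ∈ range (n - 1), (l - (j + 1))) / n !

/-- composition Σ_k a_k f^k, valid when f has zero constant term. -/
def psComp (a : ℕ → ℝ) (f : PowerSeries ℝ) : PowerSeries ℝ :=
  PowerSeries.mk fun n => ∑ k ∈ range (n + 1), a k * PowerSeries.coeff n (f ^ k)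

/-- e_λ^x(f), the degenerate exponential composed with f (f with zero constant term). -/
def degExpComp (l x : ℝ) (f : PowerSeries ℝ) : PowerSeries ℝ :=
  psComp (fun k => dfall l x k / k !) f

/-- degenerate Stirling numbers of the second kind. -/
def dS2 (l : ℝ) (n k : ℕ) : ℝ :=
  (n ! : ℝ) / k ! * PowerSeries.coeff n ((degExp l 1 - 1) ^ k)

/-- degenerate Stirling numbers of the first kind. -/
def dS1 (l : ℝ) (n k : ℕ) : ℝ :=
  (n ! : ℝ) / k ! * PowerSeries.coeff n (degLog l ^ k)

/-- (signed) Stirling numbers of the first kind: coefficients of x(x-1)···(x-n+1). -/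
def sS1 (n k : ℕ) : ℝ := (descPochhammer ℝ n).coeff k

/-- fully degenerate Bell polynomial φ_{n,λ}(x). -/
def dBell (l : ℝ) (n : ℕ) (x : ℝ) : ℝ := ∑ k ∈ range (n + 1), dS2 l n k * dfall l x k

/-- degenerate Whitney numbers of the second kind. -/
def dW (m : ℕ) (l : ℝ) (n k : ℕ) : ℝ :=
  (n ! : ℝ) / k ! *
    PowerSeries.coeff n (degExp l 1 * ((degExp l (m : ℝ) - 1) * PowerSeries.C (R := ℝ) (1 / m)) ^ k)

/-- fully degenerate Dowling polynomial d_{m,λ}(n,x). -/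
def dDowling (m : ℕ) (l : ℝ) (n : ℕ) (x : ℝ) : ℝ :=
  ∑ k ∈ range (n + 1), dW m l n k * dfall l x k

/-- division of a power series by t (coefficient shift). -/
def divT (f : PowerSeries ℝ) : PowerSeries ℝ :=
  PowerSeries.mk fun n => PowerSeries.coeff (n + 1) f

/-- degenerate Bernoulli polynomials β_{n,λ}(x): (t/(e_λ(t)−1)) e_λ^x(t) = Σ β_{n,λ}(x) tⁿ/n!. -/
def dBernoulliPoly (l : ℝ) (n : ℕ) (x : ℝ) : ℝ :=
  (n ! : ℝ) * PowerSeries.coeff n ((divT (degExp l 1 - 1))⁻¹ * degExp l x)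

/-- the λ-falling factorial polynomial (x)_{k,λ}. -/
def dfallPoly (l : ℝ) (k : ℕ) : Polynomial ℝ :=
  ∏ i ∈ range k, (Polynomial.X - Polynomial.C (i * l))

/-- degenerate poly-Bell polynomials B^{(r)}_{n,λ}(x). -/
def dPolyBell (r : ℤ) (l : ℝ) (n : ℕ) (x : ℝ) : ℝ :=
  (n ! : ℝ) * PowerSeries.coeff n
    (divT (psComp (fun k => if k = 0 then 0 else dfall l 1 k / ((k - 1)! * (k : ℝ) ^ r))
        (degLog l)) *
      (divT (degExp l 1 - 1))⁻¹ * degExp l x)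

/-- degenerate Bernoulli polynomials of the second kind b_{n,λ}(x). -/
def dBern2 (l : ℝ) (n : ℕ) (x : ℝ) : ℝ :=
  (n ! : ℝ) *
    PowerSeries.coeff n ((divT (degLog l))⁻¹ * PowerSeries.mk fun j => dfall 1 x j / j !)

/-!
For `λ ≠ 0` every degenerate exponential is a rescaled binomial series,
`e_λ^x(t) = (1 + λt)^(x/λ)`, so `((1 + u)^s)^r = (1 + u)^(rs)` shows that the substitution
`t ↦ f(t) = (1/m) log_{λ/m}(1 + mt)` turns `e_λ^x` into `e_m^x`. In particular `f` inverts
`(e_λ^m(t) - 1)/m`, and it carries the generating function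
`e_λ(t) e_λ^x((e_λ^m(t) - 1)/m) = Σ d_{m,λ}(k,x) t^k/k!` to `e_m(t) e_λ^x(t)`. Multiplying by
`e_m^{-1}(t)` and comparing coefficients of `t^n` gives the identity, because
`f^k/k! = Σ_j m^(j-k) S_{1,λ/m}(j,k) t^j/j!` and `(-1)_{q,m} = Σ_i S_1(q,i) (-1)^i m^(q-i)`.
-/

namespace PowerSeries

variable {R : Type*} [CommRing R]

theorem rescale_C (a r : R) : rescale a (C r) = C r := by
  ext n
  rcases n with _ | n <;> simp [coeff_rescale, coeff_C]

theorem coeff_pow_eq_zero_of_lt {g : R⟦X⟧} (hg : constantCoeff g = 0) {n k : ℕ} (h : n < k) :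
    coeff n (g ^ k) = 0 :=
  coeff_of_lt_order n ((Nat.cast_lt.mpr h).trans_le (le_order_pow_of_constantCoeff_eq_zero k hg))

theorem coeff_subst_eq_sum_range {g : R⟦X⟧} (hg : constantCoeff g = 0) (A : R⟦X⟧) {n N : ℕ}
    (hN : n < N) : coeff n (A.subst g) = ∑ k ∈ range N, coeff k A * coeff n (g ^ k) := by
  simp_rw [coeff_subst' (HasSubst.of_constantCoeff_zero' hg), smul_eq_mul]
  refine finsum_eq_sum_of_support_subset _ fun k hk => mem_range.mpr ?_
  by_contra hkN
  exact hk (by simp only [coeff_pow_eq_zero_of_lt hg (hN.trans_le (not_lt.mp hkN)), mul_zero])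

theorem coeff_mul_subst {g : R⟦X⟧} (hg : constantCoeff g = 0) (E A : R⟦X⟧) (n : ℕ) :
    coeff n (E * A.subst g) = ∑ k ∈ range (n + 1), coeff k A * coeff n (E * g ^ k) := by
  simp_rw [coeff_mul, mul_sum]
  rw [sum_comm]
  refine sum_congr rfl fun p hp => ?_
  rw [coeff_subst_eq_sum_range hg A (Nat.antidiagonal.snd_lt hp), mul_sum]
  exact sum_congr rfl fun k _ => by ring

end PowerSeries

theorem Ring.choose_eq_eval_descPochhammer {K : Type*} [Field K] [CharZero K] (r : K) (k : ℕ) :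
    Ring.choose r k = (descPochhammer K k).eval r / k ! := by
  rw [Ring.choose_eq_smul, ← Polynomial.aeval_eq_smeval, Polynomial.aeval_def,
    Polynomial.eval₂_eq_eval_map, descPochhammer_map, smul_eq_mul, inv_mul_eq_div]

namespace PowerSeries

variable {K : Type*} [Field K] [CharZero K]

theorem binomialSeries_pow (s : K) (N : ℕ) :
    binomialSeries K s ^ N = binomialSeries K (N * s) := by
  induction N with
  | zero => simp
  | succ N ih => rw [pow_succ, ih, ← binomialSeries_add, Nat.cast_succ, _root_.add_one_mul]

theorem binomialSeries_subst_binomialSeries_sub_one (r s : K) :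
    (binomialSeries K r).subst (binomialSeries K s - 1) = binomialSeries K (r * s) := by
  set g := binomialSeries K s - 1
  have hg0 : constantCoeff g = 0 := by simp [g]
  have hg : HasSubst g := HasSubst.of_constantCoeff_zero' hg0
  have h_nat (N : ℕ) : (binomialSeries K (N : K)).subst g = binomialSeries K (N * s) := by
    rw [binomialSeries_nat, ← binomialSeries_pow, ← coe_substAlgHom hg, map_pow, map_add, map_one,
      coe_substAlgHom, subst_X hg, add_sub_cancel]
  -- both sides have coefficients polynomial in `r`, and they agree on `ℕ`
  ext n
  let P : Polynomial K :=
    ∑ k ∈ range (n + 1), Polynomial.C (coeff n (g ^ k) / k !) * descPochhammer K k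
  let Q : Polynomial K :=
    Polynomial.C (n ! : K)⁻¹ * (descPochhammer K n).comp (Polynomial.C s * Polynomial.X)
  have hP (r : K) : coeff n ((binomialSeries K r).subst g) = P.eval r := by
    simp only [P, coeff_subst_eq_sum_range hg0 _ (Nat.lt_succ_self n),
      Polynomial.eval_finsetSum, binomialSeries_coeff, Ring.choose_eq_eval_descPochhammer,
      Polynomial.eval_mul, Polynomial.eval_C, smul_eq_mul, mul_one]
    exact sum_congr rfl fun k _ => by ring
  have hQ (r : K) : coeff n (binomialSeries K (r * s)) = Q.eval r := by
    simp only [Q, binomialSeries_coeff, Ring.choose_eq_eval_descPochhammer, Polynomial.eval_mul,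
      Polynomial.eval_C, Polynomial.eval_comp, Polynomial.eval_X, smul_eq_mul, mul_one, mul_comm s]
    exact div_eq_inv_mul _ _
  have hPQ : P = Q := Polynomial.eq_of_infinite_eval_eq _ _ <|
    Set.infinite_of_injective_forall_mem Nat.cast_injective fun N => by
      simp only [Set.mem_ofPred_eq, ← hP, ← hQ, h_nat]
  rw [hP, hQ, hPQ]

end PowerSeries

theorem dfall_mul_eq_pow_mul_eval_descPochhammer (c a : ℝ) (n : ℕ) :
    dfall c (a * c) n = c ^ n * (descPochhammer ℝ n).eval a := by
  calc ∏ i ∈ range n, (a * c - i * c) = ∏ i ∈ range n, (c * (a - i)) :=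
        prod_congr rfl fun i _ => by ring
    _ = c ^ n * (descPochhammer ℝ n).eval a := by
        rw [prod_mul_distrib, prod_const, card_range, descPochhammer_eval_eq_prod_range]

theorem coeff_degExp (l x : ℝ) (n : ℕ) : coeff n (degExp l x) = dfall l x n / n ! :=
  coeff_mk _ _

theorem degExp_eq_rescale_binomialSeries {l : ℝ} (hl : l ≠ 0) (x : ℝ) :
    degExp l x = rescale l (PowerSeries.binomialSeries ℝ (x / l)) := by
  ext n
  rw [coeff_degExp, coeff_rescale, binomialSeries_coeff, Ring.choose_eq_eval_descPochhammer,
    smul_eq_mul, mul_one, ← mul_div_assoc, ← dfall_mul_eq_pow_mul_eval_descPochhammer,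
    div_mul_cancel₀ x hl]

theorem degExp_mul {l : ℝ} (hl : l ≠ 0) (x y : ℝ) :
    degExp l x * degExp l y = degExp l (x + y) := by
  simp only [degExp_eq_rescale_binomialSeries hl, ← map_mul, ← binomialSeries_add, add_div]

theorem degExp_zero {l : ℝ} (hl : l ≠ 0) : degExp l 0 = 1 := by
  rw [degExp_eq_rescale_binomialSeries hl, zero_div, binomialSeries_zero, map_one]

theorem degLog_eq {μ : ℝ} (hμ : μ ≠ 0) :
    degLog μ = C μ⁻¹ * (PowerSeries.binomialSeries ℝ μ - 1) := by
  ext n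
  rw [coeff_C_mul, map_sub, binomialSeries_coeff, Ring.choose_eq_eval_descPochhammer, coeff_one,
    smul_eq_mul, mul_one, degLog, coeff_mk]
  rcases n with _ | n
  · simp
  · rw [if_neg n.succ_ne_zero, if_neg n.succ_ne_zero, Nat.add_sub_cancel,
      descPochhammer_eval_eq_prod_range, prod_range_succ']
    push_cast
    field_simp
    ring

def scaledDegLog (l c : ℝ) : PowerSeries ℝ := C c⁻¹ * rescale c (degLog (l / c))

theorem constantCoeff_scaledDegLog (l c : ℝ) : constantCoeff (scaledDegLog l c) = 0 := by
  simp [scaledDegLog, degLog, ← coeff_zero_eq_constantCoeff_apply]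

theorem degExp_subst_scaledDegLog {l c : ℝ} (hl : l ≠ 0) (hc : c ≠ 0) (x : ℝ) :
    (degExp l x).subst (scaledDegLog l c) = degExp c x := by
  have hf : HasSubst (scaledDegLog l c) :=
    HasSubst.of_constantCoeff_zero' (constantCoeff_scaledDegLog l c)
  have hB : HasSubst (PowerSeries.binomialSeries ℝ (l / c) - 1) :=
    HasSubst.of_constantCoeff_zero' (by simp)
  have h_smul : l • scaledDegLog l c = rescale c (PowerSeries.binomialSeries ℝ (l / c) - 1) := by
    have h_one : l * (c⁻¹ * (l / c)⁻¹) = 1 := by field_simp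
    rw [scaledDegLog, degLog_eq (div_ne_zero hl hc), map_mul, rescale_C, ← mul_assoc, ← map_mul,
      smul_eq_C_mul, ← mul_assoc, ← map_mul, h_one, map_one, one_mul]
  calc (degExp l x).subst (scaledDegLog l c)
      = (PowerSeries.binomialSeries ℝ (x / l)).subst (l • scaledDegLog l c) := by
        rw [degExp_eq_rescale_binomialSeries hl, rescale_eq_subst,
          subst_comp_subst_apply (HasSubst.smul_X' l) hf, subst_smul hf, subst_X hf]
    _ = rescale c ((PowerSeries.binomialSeries ℝ (x / l)).subst
          (PowerSeries.binomialSeries ℝ (l / c) - 1)) := by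
        rw [h_smul, rescale_eq_subst, rescale_eq_subst,
          subst_comp_subst_apply hB (HasSubst.smul_X' c)]
    _ = degExp c x := by
        rw [binomialSeries_subst_binomialSeries_sub_one, degExp_eq_rescale_binomialSeries hc,
          div_mul_div_cancel₀ hl]

theorem degExp_self {c : ℝ} (hc : c ≠ 0) : degExp c c = 1 + C c * X := by
  rw [degExp_eq_rescale_binomialSeries hc, div_self hc, ← Nat.cast_one, binomialSeries_nat, pow_one,
    map_add, map_one, rescale_X]

def dowlingGF (m : ℕ) (l x : ℝ) : PowerSeries ℝ :=
  degExp l 1 * (degExp l x).subst ((degExp l m - 1) * C (1 / (m : ℝ)))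

theorem constantCoeff_degExp_sub_one_mul_C (m : ℕ) (l : ℝ) :
    constantCoeff ((degExp l m - 1) * C (1 / (m : ℝ))) = 0 := by
  rw [map_mul, map_sub, map_one, ← coeff_zero_eq_constantCoeff_apply, coeff_degExp]
  simp [dfall]

theorem coeff_dowlingGF (m : ℕ) (l x : ℝ) (k : ℕ) :
    coeff k (dowlingGF m l x) = dDowling m l k x / k ! := by
  rw [dowlingGF, coeff_mul_subst (constantCoeff_degExp_sub_one_mul_C m l), dDowling, sum_div]
  refine sum_congr rfl fun p _ => ?_
  rw [coeff_degExp, dW]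
  field_simp

theorem dowlingGF_subst_scaledDegLog {l : ℝ} (hl : l ≠ 0) {m : ℕ} (hm : (m : ℝ) ≠ 0) (x : ℝ) :
    (dowlingGF m l x).subst (scaledDegLog l m) = degExp m 1 * degExp l x := by
  have hf : HasSubst (scaledDegLog l m) :=
    HasSubst.of_constantCoeff_zero' (constantCoeff_scaledDegLog l m)
  have hh : HasSubst ((degExp l m - 1) * C (1 / (m : ℝ))) :=
    HasSubst.of_constantCoeff_zero' (constantCoeff_degExp_sub_one_mul_C m l)
  have h_inv : ((degExp l m - 1) * C (1 / (m : ℝ))).subst (scaledDegLog l m) = X := by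
    rw [← coe_substAlgHom hf, map_mul, map_sub, map_one, coe_substAlgHom,
      degExp_subst_scaledDegLog hl hm, degExp_self hm, subst_C, add_sub_cancel_left, mul_right_comm]
    change C (m : ℝ) * C (1 / (m : ℝ)) * X = X
    rw [← map_mul, mul_one_div_cancel hm, map_one, one_mul]
  rw [dowlingGF, subst_mul hf, degExp_subst_scaledDegLog hl hm,
    subst_comp_subst_apply hh hf, h_inv, X_subst]

theorem degExp_eq_mul_subst_dowlingGF {l : ℝ} (hl : l ≠ 0) {m : ℕ} (hm : (m : ℝ) ≠ 0) (x : ℝ) :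
    degExp l x = degExp m (-1) * (dowlingGF m l x).subst (scaledDegLog l m) := by
  rw [dowlingGF_subst_scaledDegLog hl hm, ← mul_assoc, degExp_mul hm, neg_add_cancel,
    degExp_zero hm, one_mul]

theorem dfall_eq_sum_sS1 {c : ℝ} (hc : c ≠ 0) (a : ℝ) (q : ℕ) :
    dfall c a q = ∑ i ∈ range (q + 1), sS1 q i * a ^ i * c ^ (q - i) := by
  rw [← div_mul_cancel₀ a hc, dfall_mul_eq_pow_mul_eval_descPochhammer,
    Polynomial.eval_eq_sum_range' (n := q + 1) (by rw [descPochhammer_natDegree]; omega), mul_sum]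
  refine sum_congr rfl fun i hi => ?_
  rw [sS1, div_pow, ← pow_sub_mul_pow c (Nat.le_of_lt_succ (mem_range.mp hi))]
  field_simp

theorem coeff_scaledDegLog_pow (l c : ℝ) (j k : ℕ) :
    coeff j (scaledDegLog l c ^ k) = (c ^ k)⁻¹ * c ^ j * (k ! / j !) * dS1 (l / c) j k := by
  rw [scaledDegLog, mul_pow, ← map_pow, ← map_pow, coeff_C_mul, coeff_rescale, dS1, inv_pow]
  field_simp

theorem factorial_div_mul_coeff_degExp_neg_one_mul_pow {c : ℝ} (hc : c ≠ 0) (l : ℝ) (n k : ℕ) :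
    (n ! / k ! : ℝ) * coeff n (degExp c (-1) * scaledDegLog l c ^ k) =
      ∑ j ∈ Icc k n, ∑ i ∈ range (n - j + 1),
        n.choose j * dS1 (l / c) j k * sS1 (n - j) i * c ^ (n - k - i) * (-1 : ℝ) ^ i := by
  rw [mul_comm (degExp c (-1)), coeff_mul, Nat.sum_antidiagonal_eq_sum_range_succ
    (fun j q => coeff j (scaledDegLog l c ^ k) * coeff q (degExp c (-1))),
    ← sum_subset (fun j hj => mem_range.mpr (Nat.lt_succ_of_le (mem_Icc.mp hj).2))
      fun j hj hj' => ?_, mul_sum]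
  · refine sum_congr rfl fun j hj => ?_
    obtain ⟨hkj, hjn⟩ := mem_Icc.mp hj
    rw [coeff_scaledDegLog_pow, coeff_degExp, dfall_eq_sum_sS1 hc, sum_div, mul_sum, mul_sum]
    refine sum_congr rfl fun i hi => ?_
    have hij : i ≤ n - j := Nat.le_of_lt_succ (mem_range.mp hi)
    have hpow : c ^ (n - j - i) * c ^ j = c ^ (n - k - i) * c ^ k := by
      rw [← pow_add, ← pow_add]
      congr 1
      omega
    rw [Nat.cast_choose ℝ hjn]
    field_simp
    linear_combination dS1 (l / c) j k * sS1 (n - j) i * hpow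
  · have hjk : j < k := by
      simp only [mem_range, mem_Icc] at hj hj'
      omega
    rw [coeff_pow_eq_zero_of_lt (constantCoeff_scaledDegLog l c) hjk, zero_mul]

theorem stmt11 (l : ℝ) (hl : l ≠ 0) (m : ℕ) (hm : 0 < m) (n : ℕ) (x : ℝ) :
    dfall l x n =
      ∑ k ∈ range (n + 1),
        (∑ j ∈ Icc k n, ∑ i ∈ range (n - j + 1),
            n.choose j * dS1 (l / m) j k * sS1 (n - j) i * (m : ℝ) ^ (n - k - i) *
              (-1 : ℝ) ^ i) *
          dDowling m l k x := by
  have hm' : (m : ℝ) ≠ 0 := Nat.cast_ne_zero.mpr hm.ne'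
  have h_coeff := congrArg (coeff n) (degExp_eq_mul_subst_dowlingGF hl hm' x)
  rw [coeff_degExp, coeff_mul_subst (constantCoeff_scaledDegLog l m)] at h_coeff
  calc dfall l x n = n ! * (dfall l x n / n !) := by field_simp
    _ = ∑ k ∈ range (n + 1), (n ! / k ! : ℝ) *
          coeff n (degExp m (-1) * scaledDegLog l m ^ k) * dDowling m l k x := by
        rw [h_coeff, mul_sum]
        refine sum_congr rfl fun k _ => ?_
        rw [coeff_dowlingGF]
        field_simp
    _ = _ := by simp only [factorial_div_mul_coeff_degExp_neg_one_mul_pow hm']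

end
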